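/- arXiv:math/0306054 — 3 statements merged into one kernel-verified Lean document; each statement's English description precedes it below -/
import Mathlib

section
/- Let M be a finitely generated ℤ[t]-module of exponent 2ⁿ which has length one. Then every ℤ[t]-submodule of M has length one. -/
/-!
Write `R = ℤ[t]` and let `K = M[2]` be the `2`-torsion of `M`. If `M` has length one, then `K` is
torsion-free as a module over `R ⧸ (2) ≅ 𝔽₂[t]`, and this property passes to submodules and to
`M ⧸ K`. For a finitely generated `M` with this property, `K` is free of finite rank over the PID
`𝔽₂[t]`, so `0 → R^c --2--> R^c → K → 0` is a resolution, while `M ⧸ K` has smaller exponent.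
Since length one is closed under extensions (horseshoe lemma), induction on the exponent shows
that `M` has length one.
-/

/-- An `R`-module `M` has *length one* if there is a short exact sequence
`0 → F₁ → F₀ → M → 0` with `F₀`, `F₁` finitely generated free `R`-modules. -/
def IsLengthOne (R M : Type*) [CommRing R] [AddCommGroup M] [Module R M] : Prop :=
  ∃ (k l : ℕ) (f : (Fin k → R) →ₗ[R] (Fin l → R)) (g : (Fin l → R) →ₗ[R] M),
    Function.Injective f ∧ Function.Surjective g ∧ LinearMap.range f = LinearMap.ker g

section

variable {R M : Type*} [CommRing R] [AddCommGroup M] [Module R M]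

theorem isLengthOne_of_exact {F₁ F₀ : Type*} [AddCommGroup F₁] [Module R F₁] [Module.Free R F₁]
    [Module.Finite R F₁] [AddCommGroup F₀] [Module R F₀] [Module.Free R F₀] [Module.Finite R F₀]
    (f : F₁ →ₗ[R] F₀) (g : F₀ →ₗ[R] M) (hf : Function.Injective f)
    (hg : Function.Surjective g) (hfg : LinearMap.range f = LinearMap.ker g) :
    IsLengthOne R M := by
  let e₁ := ((Module.Free.chooseBasis R F₁).reindex (Fintype.equivFin _)).equivFun
  let e₀ := ((Module.Free.chooseBasis R F₀).reindex (Fintype.equivFin _)).equivFun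
  refine ⟨_, _, e₀.toLinearMap ∘ₗ f ∘ₗ e₁.symm.toLinearMap, g ∘ₗ e₀.symm.toLinearMap,
    e₀.injective.comp (hf.comp e₁.symm.injective), hg.comp e₀.symm.surjective, ?_⟩
  rw [LinearMap.range_comp, LinearMap.range_comp, LinearEquiv.range, Submodule.map_top, hfg,
    LinearMap.ker_comp, Submodule.comap_equiv_eq_map_symm, LinearEquiv.symm_symm]

theorem isLengthOne_of_subsingleton [Subsingleton M] : IsLengthOne R M :=
  isLengthOne_of_exact (0 : (Fin 0 → R) →ₗ[R] (Fin 0 → R)) (0 : (Fin 0 → R) →ₗ[R] M)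
    (Function.injective_of_subsingleton _) (fun _ => ⟨0, Subsingleton.elim _ _⟩)
    (Subsingleton.elim _ _)

theorem IsLengthOne.of_submodule_of_quotient {K : Submodule R M} (hK : IsLengthOne R K)
    (hQ : IsLengthOne R (M ⧸ K)) : IsLengthOne R M := by
  obtain ⟨k, l, f, g, hf, hg, hfg⟩ := hK
  obtain ⟨k', l', f', g', hf', hg', hfg'⟩ := hQ
  obtain ⟨h, hh⟩ := Module.projective_lifting_property K.mkQ g' K.mkQ_surjective
  have hhf : ∀ v, h (f' v) ∈ K := fun v => by
    rw [← Submodule.Quotient.mk_eq_zero, ← K.mkQ_apply, ← LinearMap.comp_apply, hh,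
      ← LinearMap.mem_ker, ← hfg']
    exact ⟨v, rfl⟩
  obtain ⟨τ, hτ⟩ := Module.projective_lifting_property g ((h ∘ₗ f').codRestrict K hhf) hg
  have hgτ : ∀ v, (g (τ v) : M) = h (f' v) := fun v => congr($hτ v)
  have hgf : ∀ u, g (f u) = 0 := fun u => by
    rw [← LinearMap.mem_ker, ← hfg]; exact ⟨u, rfl⟩
  let F := (f ∘ₗ LinearMap.fst R _ _ - τ ∘ₗ LinearMap.snd R _ _).prod (f' ∘ₗ LinearMap.snd R _ _)
  let G := (K.subtype ∘ₗ g).coprod h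
  have hF : ∀ u v, F (u, v) = (f u - τ v, f' v) := fun _ _ => rfl
  have hG : ∀ x y, G (x, y) = (g x : M) + h y := fun _ _ => rfl
  refine isLengthOne_of_exact F G ?_ ?_ ?_
  · rw [← LinearMap.ker_eq_bot, LinearMap.ker_eq_bot']
    rintro ⟨u, v⟩ huv
    obtain ⟨hu, hv⟩ := Prod.mk_eq_zero.mp ((hF u v).symm.trans huv)
    obtain rfl : v = 0 := (map_eq_zero_iff f' hf').mp hv
    rw [map_zero, sub_zero, map_eq_zero_iff f hf] at hu
    rw [hu, Prod.mk_zero_zero]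
  · intro z
    obtain ⟨w, hw⟩ := hg' (K.mkQ z)
    have hzw : z - h w ∈ K := by
      rw [← Submodule.Quotient.mk_eq_zero, Submodule.Quotient.mk_sub, ← K.mkQ_apply,
        ← K.mkQ_apply, ← LinearMap.comp_apply, hh, hw, sub_self]
    obtain ⟨r, hr⟩ := hg ⟨_, hzw⟩
    exact ⟨(r, w), by rw [hG, hr, sub_add_cancel]⟩
  · ext ⟨x, y⟩
    simp only [LinearMap.mem_range, LinearMap.mem_ker, Prod.exists, hF, hG]
    constructor
    · rintro ⟨u, v, huv⟩
      simp only [Prod.ext_iff] at huv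
      rw [← huv.1, ← huv.2, map_sub, hgf, zero_sub, Submodule.coe_neg, hgτ, neg_add_cancel]
    · intro hxy
      have hy : y ∈ LinearMap.ker g' := by
        rw [LinearMap.mem_ker, ← hh, LinearMap.comp_apply, K.mkQ_apply,
          Submodule.Quotient.mk_eq_zero, eq_neg_of_add_eq_zero_right hxy]
        exact K.neg_mem (g x).2
      obtain ⟨v, rfl⟩ := hfg' ▸ hy
      have hx : x + τ v ∈ LinearMap.ker g := by
        rw [LinearMap.mem_ker, map_add, ← Submodule.coe_eq_zero, Submodule.coe_add, hgτ, hxy]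
      obtain ⟨u, hu⟩ := hfg ▸ hx
      exact ⟨u, v, by rw [hu, add_sub_cancel_right]⟩

def TorsionByIsTorsionFree (p : R) (M : Type*) [AddCommGroup M] [Module R M] : Prop :=
  ∀ x : M, p • x = 0 → ∀ q : R, ¬ p ∣ q → q • x = 0 → x = 0

variable {p : R}

theorem TorsionByIsTorsionFree.of_injective {N : Type*} [AddCommGroup N] [Module R N]
    (f : M →ₗ[R] N) (hf : Function.Injective f) (hN : TorsionByIsTorsionFree p N) :
    TorsionByIsTorsionFree p M := fun x hpx q hq hqx =>
  (map_eq_zero_iff f hf).mp <|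
    hN (f x) (by rw [← map_smul, hpx, map_zero]) q hq (by rw [← map_smul, hqx, map_zero])

theorem TorsionByIsTorsionFree.quotient_torsionBy (h : TorsionByIsTorsionFree p M) :
    TorsionByIsTorsionFree p (M ⧸ Submodule.torsionBy R M p) := by
  intro x hpx q hq hqx
  obtain ⟨y, rfl⟩ := Submodule.mkQ_surjective _ x
  simp only [Submodule.mkQ_apply, ← Submodule.Quotient.mk_smul, Submodule.Quotient.mk_eq_zero,
    Submodule.mem_torsionBy_iff] at hpx hqx ⊢
  exact h _ hpx q hq (by rw [smul_comm, hqx])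

theorem isTorsionBy_quotient_torsionBy {n : ℕ} (h : Module.IsTorsionBy R M (p ^ (n + 1))) :
    Module.IsTorsionBy R (M ⧸ Submodule.torsionBy R M p) (p ^ n) := by
  intro x
  obtain ⟨y, rfl⟩ := Submodule.mkQ_surjective _ x
  rw [Submodule.mkQ_apply, ← Submodule.Quotient.mk_smul, Submodule.Quotient.mk_eq_zero,
    Submodule.mem_torsionBy_iff, smul_smul, ← pow_succ']
  exact @h y

theorem IsLengthOne.torsionByIsTorsionFree [IsDomain R] (hp : Prime p) (hM : IsLengthOne R M) :
    TorsionByIsTorsionFree p M := by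
  obtain ⟨k, l, f, g, hf, hg, hfg⟩ := hM
  intro x hpx q hq hqx
  obtain ⟨v, rfl⟩ := hg x
  obtain ⟨a, ha⟩ : p • v ∈ LinearMap.range f := by rw [hfg, LinearMap.mem_ker, map_smul, hpx]
  obtain ⟨b, hb⟩ : q • v ∈ LinearMap.range f := by rw [hfg, LinearMap.mem_ker, map_smul, hqx]
  have hab : q • a = p • b := hf (by rw [map_smul, map_smul, ha, hb, smul_comm])
  have hdvd : ∀ i, p ∣ a i := fun i =>
    (hp.dvd_or_dvd ⟨b i, congr_fun hab i⟩).resolve_left hq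
  choose a' ha' using hdvd
  have hv : v = f a' := smul_right_injective _ hp.ne_zero <| by
    change p • v = p • f a'
    rw [← ha, ← map_smul]
    exact congrArg f (funext ha')
  rw [← LinearMap.mem_ker, ← hfg, hv]
  exact ⟨a', rfl⟩

theorem isLengthOne_of_free_quotient (hp : IsRegular p) [Module (R ⧸ Ideal.span {p}) M]
    [IsScalarTower R (R ⧸ Ideal.span {p}) M] [Module.Free (R ⧸ Ideal.span {p}) M]
    [Module.Finite (R ⧸ Ideal.span {p}) M] : IsLengthOne R M := by
  let b := Module.Free.chooseBasis (R ⧸ Ideal.span {p}) M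
  let e : (_ → R) →ₗ[R] M := b.equivFun.symm.toLinearMap.restrictScalars R ∘ₗ
    (Ideal.Quotient.mkₐ R (Ideal.span {p})).toLinearMap.compLeft _
  refine isLengthOne_of_exact (p • LinearMap.id) e (hp.smul_right_injective (M := _ → R))
    (b.equivFun.symm.surjective.comp Ideal.Quotient.mk_surjective.comp_left) ?_
  rw [LinearMap.ker_comp_of_ker_eq_bot _ (by simp), LinearMap.ker_compLeft]
  ext r
  simp only [LinearMap.mem_range, LinearMap.smul_apply, LinearMap.id_apply, Submodule.mem_pi,
    Set.mem_univ, true_imp_iff, LinearMap.mem_ker, AlgHom.toLinearMap_apply,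
    Ideal.Quotient.mkₐ_eq_mk, Ideal.Quotient.eq_zero_iff_mem, Ideal.mem_span_singleton]
  refine ⟨?_, fun h => ?_⟩
  · rintro ⟨s, rfl⟩ i
    exact dvd_mul_right _ _
  · choose s hs using h
    exact ⟨s, funext fun i => (hs i).symm⟩

theorem isLengthOne_of_isTorsionBy [IsDomain R] (hp : Prime p)
    [IsPrincipalIdealRing (R ⧸ Ideal.span {p})] [Module.Finite R M]
    (hM : Module.IsTorsionBy R M p) (hfree : TorsionByIsTorsionFree p M) : IsLengthOne R M := by
  let := hM.module
  have : IsDomain (R ⧸ Ideal.span {p}) := (Ideal.Quotient.isDomain_iff_prime _).mpr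
    ((Ideal.span_singleton_prime hp.ne_zero).mpr hp)
  have : Module.Finite (R ⧸ Ideal.span {p}) M := .of_restrictScalars_finite R _ _
  have : Module.IsTorsionFree (R ⧸ Ideal.span {p}) M := .of_smul_eq_zero fun z x hzx => by
    obtain ⟨q, rfl⟩ := Ideal.Quotient.mk_surjective z
    rw [Ideal.Quotient.eq_zero_iff_mem, Ideal.mem_span_singleton]
    exact (em (p ∣ q)).imp_right fun hq => hfree x (@hM x) q hq hzx
  exact isLengthOne_of_free_quotient (.of_ne_zero hp.ne_zero)

theorem isLengthOne_of_isTorsionBy_pow [IsNoetherianRing R] [IsDomain R] (hp : Prime p)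
    [IsPrincipalIdealRing (R ⧸ Ideal.span {p})] (n : ℕ) [Module.Finite R M]
    (hM : Module.IsTorsionBy R M (p ^ n)) (hfree : TorsionByIsTorsionFree p M) :
    IsLengthOne R M := by
  induction n generalizing M with
  | zero =>
    have : Subsingleton M := subsingleton_of_forall_eq 0 fun x => by simpa using @hM x
    exact isLengthOne_of_subsingleton
  | succ n ih =>
    let K := Submodule.torsionBy R M p
    have hK : IsLengthOne R K := isLengthOne_of_isTorsionBy hp (Submodule.torsionBy_isTorsionBy p)
      (hfree.of_injective K.subtype K.injective_subtype)
    exact hK.of_submodule_of_quotient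
      (ih (isTorsionBy_quotient_torsionBy hM) hfree.quotient_torsionBy)

end

theorem Polynomial.isPrincipalIdealRing_quotient_span_C {R : Type*} [CommRing R] (p : R)
    [(Ideal.span {p}).IsMaximal] :
    IsPrincipalIdealRing (Polynomial R ⧸ Ideal.span {Polynomial.C p}) := by
  let := Ideal.Quotient.field (Ideal.span {p})
  have e := Ideal.polynomialQuotientEquivQuotientPolynomial (Ideal.span {p})
  rw [Ideal.map_span, Set.image_singleton] at e
  exact .of_surjective e.toRingHom e.surjective

/-- Let `M` be a finitely generated `ℤ[t]`-module of exponent `2ⁿ` which has length one.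
Then every `ℤ[t]`-submodule of `M` has length one. -/
theorem submodule_isLengthOne
    (M : Type*) [AddCommGroup M] [Module (Polynomial ℤ) M]
    [Module.Finite (Polynomial ℤ) M]
    (n : ℕ) (hexp : ∀ x : M, (2 : Polynomial ℤ) ^ n • x = 0)
    (hM : IsLengthOne (Polynomial ℤ) M)
    (N : Submodule (Polynomial ℤ) M) :
    IsLengthOne (Polynomial ℤ) N := by
  have h2 : Prime (2 : Polynomial ℤ) := by simpa using Polynomial.prime_C_iff.mpr Int.prime_two
  have : IsPrincipalIdealRing (Polynomial ℤ ⧸ Ideal.span {(2 : Polynomial ℤ)}) := by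
    have := Int.ideal_span_isMaximal_of_prime 2
    have := Polynomial.isPrincipalIdealRing_quotient_span_C (2 : ℤ)
    rwa [Polynomial.C_ofNat] at this
  refine isLengthOne_of_isTorsionBy_pow h2 n (fun x => Subtype.ext (hexp (x : M))) ?_
  exact (hM.torsionByIsTorsionFree h2).of_injective N.subtype N.injective_subtype
end

section
/- Let M be a length-one ℤ[t]-module of exponent 2ⁿ. Then the double-duality (evaluation) map D : M → (M^∧)^∧, defined by D(x)(φ) = φ(x), is an isomorphism of ℤ[t]-modules. -/
noncomputable instance : Algebra (Polynomial ℤ) (Polynomial ℚ) :=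
  (Polynomial.mapRingHom (Int.castRingHom ℚ)).toAlgebra

/-- The `ℤ[t]`-module `ℚ[t]/ℤ[t]`. -/
noncomputable abbrev QtZt : Type :=
  Polynomial ℚ ⧸ LinearMap.range (Algebra.linearMap (Polynomial ℤ) (Polynomial ℚ))

/-!
Put `N = 2ⁿ`. As `N` kills `M = coker f`, there is `q : F₀ → F₁` with `f ∘ q = N` and
`q ∘ f = N`. Every `φ : M → ℚ[t]/ℤ[t]` lands in the `N`-torsion, which `ε : p ↦ p / N` identifies
with `ℤ[t]/(N)`. Lifting `φ ∘ g` through `ε` to `c : F₀ → ℤ[t]` and writing `c ∘ f = N • ψ` shows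
that the functionals on `M` are exactly the maps `g y ↦ ε (ψ (q y))` with `ψ ∈ F₁^*`, so `M^∧` is
the cokernel of `f^*`, i.e. `Ext¹(M, ℤ[t])`. By `F₁ ≅ F₁^{**}`, an element of `M^∧^∧` is then
`ψ ↦ ε (ψ a)` for some `a ∈ F₁`; it vanishes on the `ψ = χ ∘ f`, which forces `f a = N • y₀`, and
`g y₀` is its preimage. Injectivity is the same computation run backwards.
All that matters about `ℤ[t]`, `2ⁿ` and `ℚ[t]/ℤ[t]` is that `N` is a non-zero-divisor and that
`ε` induces `ℤ[t]/(N) ≅ (ℚ[t]/ℤ[t])[N]`.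
-/

open Module Function

section Lifting

variable {R A B C : Type*} [CommRing R] [AddCommGroup A] [Module R A] [AddCommGroup B]
  [Module R B] [AddCommGroup C] [Module R C]

theorem LinearMap.exists_comp_eq_of_injective {i : A →ₗ[R] B} (hi : Injective i) (h : C →ₗ[R] B)
    (hle : LinearMap.range h ≤ LinearMap.range i) : ∃ h' : C →ₗ[R] A, i ∘ₗ h' = h :=
  ⟨(LinearEquiv.ofInjective i hi).symm.toLinearMap ∘ₗ h.codRestrict _ fun x => hle ⟨x, rfl⟩,
    by ext; simp⟩

theorem Module.Projective.exists_comp_eq_of_range_le [Projective R C] (p : A →ₗ[R] B)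
    (h : C →ₗ[R] B) (hle : LinearMap.range h ≤ LinearMap.range p) :
    ∃ h' : C →ₗ[R] A, p ∘ₗ h' = h := by
  obtain ⟨h', hh'⟩ := projective_lifting_property p.rangeRestrict
    (h.codRestrict _ fun x => hle ⟨x, rfl⟩) p.surjective_rangeRestrict
  exact ⟨h', LinearMap.ext fun x => congr(($hh' x : B))⟩

end Lifting

section Duals

variable {R P T : Type*} [CommRing R] [AddCommGroup P] [Module R P] [AddCommGroup T] [Module R T]
  {N : R}

theorem LinearMap.exists_eq_smul_of_forall_dvd (hN : IsRegular N) (u : P →ₗ[R] R)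
    (h : ∀ x, N ∣ u x) : ∃ d : P →ₗ[R] R, u = N • d := by
  choose d hd using h
  refine ⟨{ toFun := d, map_add' := fun x y => hN.1 ?_, map_smul' := fun r x => hN.1 ?_ }, ?_⟩
  · simp only [mul_add, ← hd, map_add]
  · simp only [smul_eq_mul, RingHom.id_apply, mul_left_comm N r, ← hd, map_smul]
  · ext x
    exact hd x

theorem Module.exists_eq_smul_of_forall_dual_dvd [IsReflexive R P] (hN : IsRegular N) (x : P)
    (h : ∀ ψ : Dual R P, N ∣ ψ x) : ∃ z, x = N • z := by
  obtain ⟨d, hd⟩ := (Dual.eval R P x).exists_eq_smul_of_forall_dvd hN h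
  obtain ⟨z, rfl⟩ := (bijective_dual_eval R P).2 d
  exact ⟨z, (bijective_dual_eval R P).1 (by rw [hd, map_smul])⟩

theorem Module.exists_forall_eq_apply_of_range_le [Projective R P] [Module.Finite R P]
    (ε : R →ₗ[R] T) (Λ : Dual R P →ₗ[R] T) (hle : LinearMap.range Λ ≤ LinearMap.range ε) :
    ∃ a : P, ∀ ψ, Λ ψ = ε (ψ a) := by
  obtain ⟨c, rfl⟩ := Projective.exists_comp_eq_of_range_le ε Λ hle
  obtain ⟨a, rfl⟩ := (bijective_dual_eval R P).2 c
  exact ⟨a, fun _ => rfl⟩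

end Duals

/-- `ε` induces an isomorphism `R ⧸ (N) ≃ₗ[R] Submodule.torsionBy R T N`. -/
structure RepresentsTorsionBy {R T : Type*} [CommRing R] [AddCommGroup T] [Module R T]
    (ε : R →ₗ[R] T) (N : R) : Prop where
  ker_eq : LinearMap.ker ε = Ideal.span {N}
  torsionBy_le_range : Submodule.torsionBy R T N ≤ LinearMap.range ε

section Duality

variable {R T F₀ F₁ M : Type*} [CommRing R] [AddCommGroup T] [Module R T]
  [AddCommGroup F₀] [Module R F₀] [AddCommGroup F₁] [Module R F₁] [AddCommGroup M] [Module R M]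
  {ε : R →ₗ[R] T} {N : R} {f : F₁ →ₗ[R] F₀} {g : F₀ →ₗ[R] M} {q : F₀ →ₗ[R] F₁}

theorem RepresentsTorsionBy.apply_eq_zero_iff (hε : RepresentsTorsionBy ε N) (p : R) :
    ε p = 0 ↔ N ∣ p := by
  rw [← LinearMap.mem_ker, hε.ker_eq, Ideal.mem_span_singleton]

theorem RepresentsTorsionBy.smul_apply_eq_zero (hε : RepresentsTorsionBy ε N) (p : R) :
    N • ε p = 0 := by
  rw [← map_smul, smul_eq_mul, hε.apply_eq_zero_iff]
  exact dvd_mul_right N p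

theorem RepresentsTorsionBy.mem_range (hε : RepresentsTorsionBy ε N) {z : T} (hz : N • z = 0) :
    z ∈ LinearMap.range ε :=
  hε.torsionBy_le_range ((Submodule.mem_torsionBy_iff _ _).2 hz)

theorem Module.IsTorsionBy.linearMap (hM : IsTorsionBy R M N) :
    IsTorsionBy R (M →ₗ[R] T) N := fun φ => LinearMap.ext fun x => by
  rw [LinearMap.smul_apply, ← map_smul, hM, map_zero, LinearMap.zero_apply]

namespace Function.Exact

theorem exists_comp_eq_smul_id (hfg : Exact f g) (hf : Injective f) (hM : IsTorsionBy R M N) :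
    ∃ q : F₀ →ₗ[R] F₁, f ∘ₗ q = N • LinearMap.id ∧ q ∘ₗ f = N • LinearMap.id := by
  obtain ⟨q, hq⟩ := LinearMap.exists_comp_eq_of_injective hf (N • LinearMap.id) (by
    rintro _ ⟨y, rfl⟩
    exact (hfg _).1 (by simp [hM]))
  refine ⟨q, hq, LinearMap.ext fun z => hf ?_⟩
  simpa using congr($hq (f z))

theorem exists_dual_apply_eq (hfg : Exact f g) (hg : Surjective g)
    (hε : RepresentsTorsionBy ε N) (hqf : q ∘ₗ f = N • LinearMap.id) :
    ∃ δ : Dual R F₁ →ₗ[R] M →ₗ[R] T, ∀ ψ y, δ ψ (g y) = ε (ψ (q y)) := by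
  obtain ⟨δ, hδ⟩ := LinearMap.exists_comp_eq_of_injective
    (LinearMap.lcomp_injective_of_surjective (S := R) (N := T) g hg)
    (LinearMap.lcomp R T q ∘ₗ LinearMap.compRight R ε) (by
      rintro _ ⟨ψ, rfl⟩
      refine (LinearMap.exact_lcomp_of_exact_of_surjective T hfg hg _).1 (LinearMap.ext fun z => ?_)
      simp [← LinearMap.comp_apply q f, hqf, hε.smul_apply_eq_zero])
  exact ⟨δ, fun ψ y => congr($hδ ψ y)⟩

theorem surjective_of_forall_apply_eq (hfg : Exact f g) (hg : Surjective g) [Projective R F₀]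
    (hε : RepresentsTorsionBy ε N) (hN : IsRegular N) (hM : IsTorsionBy R M N)
    (hfq : f ∘ₗ q = N • LinearMap.id) {δ : Dual R F₁ →ₗ[R] M →ₗ[R] T}
    (hδ : ∀ ψ y, δ ψ (g y) = ε (ψ (q y))) : Surjective δ := by
  intro φ
  obtain ⟨c, hc⟩ := Projective.exists_comp_eq_of_range_le ε (φ ∘ₗ g) (by
    rintro _ ⟨y, rfl⟩
    exact hε.mem_range (by rw [LinearMap.comp_apply, ← map_smul, hM, map_zero]))
  obtain ⟨d, hd⟩ := (c ∘ₗ f).exists_eq_smul_of_forall_dvd hN fun z => by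
    rw [← hε.apply_eq_zero_iff]
    simpa [hfg.apply_apply_eq_zero] using congr($hc (f z))
  refine ⟨d, (LinearMap.cancel_right hg).1 (LinearMap.ext fun y => ?_)⟩
  have hdq : d (q y) = c y := hN.1 <|
    calc N * d (q y) = c (f (q y)) := congr($hd (q y)).symm
      _ = N * c y := by rw [show f (q y) = N • y from congr($hfq y), map_smul, smul_eq_mul]
  rw [LinearMap.comp_apply, hδ, hdq]
  exact congr($hc y)

theorem mem_range_of_forall_apply_eq_zero [IsTorsionFree R F₀] [IsReflexive R F₁]
    (hε : RepresentsTorsionBy ε N) (hN : IsRegular N) (hfq : f ∘ₗ q = N • LinearMap.id) (y : F₀) (h : ∀ ψ : Dual R F₁, ε (ψ (q y)) = 0) :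
    y ∈ LinearMap.range f := by
  obtain ⟨z, hz⟩ := exists_eq_smul_of_forall_dual_dvd hN (q y) fun ψ =>
    (hε.apply_eq_zero_iff _).1 (h ψ)
  refine ⟨z, hN.isSMulRegular ?_⟩
  calc N • f z = f (q y) := by rw [hz, map_smul]
    _ = N • y := congr($hfq y)

theorem injective_applyₗ (hfg : Exact f g) (hg : Surjective g) [IsTorsionFree R F₀]
    [IsReflexive R F₁] (hε : RepresentsTorsionBy ε N) (hN : IsRegular N)
    (hfq : f ∘ₗ q = N • LinearMap.id) {δ : Dual R F₁ →ₗ[R] M →ₗ[R] T}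
    (hδ : ∀ ψ y, δ ψ (g y) = ε (ψ (q y))) :
    Injective (LinearMap.applyₗ : M →ₗ[R] (M →ₗ[R] T) →ₗ[R] T) := by
  refine (injective_iff_map_eq_zero _).2 fun x hx => ?_
  obtain ⟨y, rfl⟩ := hg x
  obtain ⟨z, rfl⟩ := mem_range_of_forall_apply_eq_zero hε hN hfq y fun ψ => by
    rw [← hδ]
    exact congr($hx (δ ψ))
  exact hfg.apply_apply_eq_zero z

theorem surjective_applyₗ (hfg : Exact f g) (hg : Surjective g) [Projective R F₀]
    [IsReflexive R F₀] [Module.Finite R F₁] [Projective R F₁] (hε : RepresentsTorsionBy ε N)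
    (hN : IsRegular N) (hM : IsTorsionBy R M N) (hfq : f ∘ₗ q = N • LinearMap.id)
    (hqf : q ∘ₗ f = N • LinearMap.id) {δ : Dual R F₁ →ₗ[R] M →ₗ[R] T}
    (hδ : ∀ ψ y, δ ψ (g y) = ε (ψ (q y))) :
    Surjective (LinearMap.applyₗ : M →ₗ[R] (M →ₗ[R] T) →ₗ[R] T) := by
  intro Φ
  obtain ⟨a, ha⟩ := exists_forall_eq_apply_of_range_le ε (Φ ∘ₗ δ) (by
    rintro _ ⟨ψ, rfl⟩
    exact hε.mem_range (by rw [LinearMap.comp_apply, ← map_smul, hM.linearMap, map_zero]))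
  have hfa : ∀ χ : Dual R F₀, N ∣ χ (f a) := fun χ => by
    have hδχ : δ (χ ∘ₗ f) = 0 := (LinearMap.cancel_right hg).1 <| LinearMap.ext fun y => by
      rw [LinearMap.comp_apply, hδ, LinearMap.comp_apply, show f (q y) = N • y from congr($hfq y),
        map_smul, map_smul, hε.smul_apply_eq_zero, LinearMap.zero_comp, LinearMap.zero_apply]
    rw [← hε.apply_eq_zero_iff, ← LinearMap.comp_apply χ f, ← ha, LinearMap.comp_apply, hδχ,
      map_zero]
  obtain ⟨y₀, hy₀⟩ := exists_eq_smul_of_forall_dual_dvd hN (f a) hfa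
  have hqy₀ : q y₀ = a := hN.isSMulRegular <|
    calc N • q y₀ = q (f a) := by rw [hy₀, map_smul]
      _ = N • a := congr($hqf a)
  refine ⟨g y₀, LinearMap.ext fun φ => ?_⟩
  obtain ⟨ψ, rfl⟩ := hfg.surjective_of_forall_apply_eq hg hε hN hM hfq hδ φ
  rw [LinearMap.applyₗ_apply_apply, hδ, hqy₀, ← LinearMap.comp_apply Φ δ, ha]

theorem bijective_applyₗ (hfg : Exact f g) (hf : Injective f) (hg : Surjective g)
    [Module.Finite R F₀] [Projective R F₀] [Module.Finite R F₁] [Projective R F₁]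
    (hε : RepresentsTorsionBy ε N) (hN : IsRegular N) (hM : IsTorsionBy R M N) :
    Bijective (LinearMap.applyₗ : M →ₗ[R] (M →ₗ[R] T) →ₗ[R] T) := by
  obtain ⟨q, hfq, hqf⟩ := hfg.exists_comp_eq_smul_id hf hM
  obtain ⟨δ, hδ⟩ := hfg.exists_dual_apply_eq hg hε hqf
  exact ⟨hfg.injective_applyₗ hg hε hN hfq hδ, hfg.surjective_applyₗ hg hε hN hM hfq hqf hδ⟩

end Function.Exact

end Duality

open Polynomial

theorem Polynomial.eq_C_inv_mul_iff {K : Type*} [Field K] {c : K} (hc : c ≠ 0) {v w : K[X]} :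
    v = C c⁻¹ * w ↔ C c * v = w := by
  have hC : C c * C c⁻¹ = 1 := by rw [← C_mul, mul_inv_cancel₀ hc, C_1]
  constructor
  · rintro rfl
    rw [← mul_assoc, hC, one_mul]
  · rintro rfl
    rw [← mul_assoc, mul_comm _ (C _), hC, one_mul]

namespace QtZt

noncomputable def divBy (m : ℤ) : ℤ[X] →ₗ[ℤ[X]] QtZt :=
  (LinearMap.range (Algebra.linearMap ℤ[X] ℚ[X])).mkQ ∘ₗ
    LinearMap.mulLeft ℤ[X] (C (m : ℚ)⁻¹) ∘ₗ Algebra.linearMap ℤ[X] ℚ[X]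

theorem algebraMap_injective : Injective (algebraMap ℤ[X] ℚ[X]) :=
  map_injective _ Int.cast_injective

theorem algebraMap_intCast_mul (m : ℤ) (u : ℤ[X]) :
    algebraMap ℤ[X] ℚ[X] (m * u) = C (m : ℚ) * algebraMap ℤ[X] ℚ[X] u := by
  rw [map_mul, map_intCast, ← C_eq_intCast]


theorem ker_divBy {m : ℤ} (hm : m ≠ 0) : LinearMap.ker (divBy m) = Ideal.span {(m : ℤ[X])} := by
  have hm' : (m : ℚ) ≠ 0 := Int.cast_ne_zero.2 hm
  ext p
  simp only [LinearMap.mem_ker, divBy, LinearMap.comp_apply, Submodule.mkQ_apply,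
    Submodule.Quotient.mk_eq_zero, LinearMap.mem_range, Algebra.linearMap_apply,
    LinearMap.mulLeft_apply, Ideal.mem_span_singleton, eq_C_inv_mul_iff hm',
    ← algebraMap_intCast_mul, algebraMap_injective.eq_iff]
  exact ⟨fun ⟨u, hu⟩ => ⟨u, hu.symm⟩, fun ⟨u, hu⟩ => ⟨u, hu.symm⟩⟩

theorem torsionBy_le_range_divBy {m : ℤ} (hm : m ≠ 0) :
    Submodule.torsionBy ℤ[X] QtZt m ≤ LinearMap.range (divBy m) := by
  have hm' : (m : ℚ) ≠ 0 := Int.cast_ne_zero.2 hm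
  intro z hz
  obtain ⟨w, rfl⟩ := Submodule.Quotient.mk_surjective _ z
  rw [Submodule.mem_torsionBy_iff, ← Submodule.Quotient.mk_smul,
    Submodule.Quotient.mk_eq_zero] at hz
  obtain ⟨v, hv⟩ := hz
  have hmw : C (m : ℚ) * w = algebraMap ℤ[X] ℚ[X] v := by
    rw [← Algebra.linearMap_apply, hv, Algebra.smul_def, map_intCast (algebraMap ℤ[X] ℚ[X]),
      ← C_eq_intCast]
  exact ⟨v, congrArg _ ((eq_C_inv_mul_iff hm').2 hmw).symm⟩

theorem representsTorsionBy_divBy {m : ℤ} (hm : m ≠ 0) :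
    RepresentsTorsionBy (divBy m) (m : ℤ[X]) :=
  ⟨ker_divBy hm, torsionBy_le_range_divBy hm⟩

end QtZt

/-- Let `M` be a length-one `ℤ[t]`-module of exponent `2ⁿ`.  Then the double-duality
(evaluation) map `D : M → (M^∧)^∧`, `D(x)(φ) = φ(x)`, where `M^∧ = Hom(M, ℚ[t]/ℤ[t])`,
is an isomorphism of `ℤ[t]`-modules. -/
theorem double_duality_bijective
    (M : Type) [AddCommGroup M] [Module (Polynomial ℤ) M]
    (n : ℕ) (hM : IsLengthOne (Polynomial ℤ) M)
    (hexp : ∀ x : M, (2 : Polynomial ℤ) ^ n • x = 0) :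
    ∃ D : M →ₗ[Polynomial ℤ]
        ((M →ₗ[Polynomial ℤ] QtZt) →ₗ[Polynomial ℤ] QtZt),
      (∀ (x : M) (φ : M →ₗ[Polynomial ℤ] QtZt), D x φ = φ x) ∧
      Function.Bijective D := by
  obtain ⟨k, l, f, g, hf, hg, hfg⟩ := hM
  have h2 : (2 : ℤ[X]) ^ n = ((2 ^ n : ℤ) : ℤ[X]) := by push_cast; rfl
  have h2n : (2 ^ n : ℤ) ≠ 0 := pow_ne_zero n two_ne_zero
  rw [h2] at hexp
  exact ⟨LinearMap.applyₗ, fun _ _ => rfl,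
    (LinearMap.exact_iff.2 hfg.symm).bijective_applyₗ hf hg (QtZt.representsTorsionBy_divBy h2n)
      (.of_ne_zero (Int.cast_ne_zero.2 h2n)) hexp⟩
end

section
/- Every length-one ℤ[t]-module M with 4·M = 0 is isomorphic as a ℤ[t]-module to a direct sum M(p₁) ⊕ M(p₂) ⊕ … ⊕ M(p_k) ⊕ (ℤ[t]/2ℤ[t])^j for some integers k, j ≥ 0 and some polynomials p₁, …, p_k ∈ ℤ[t] \ 2ℤ[t]. -/
/-- The ring (and `ℤ[t]`-module) `ℤ[t]/4ℤ[t]`. -/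
noncomputable abbrev Z4t : Type := Polynomial ℤ ⧸ Ideal.span {(4 : Polynomial ℤ)}

/-- For `p ∈ ℤ[t]`, `M(p)` is the `ℤ[t]`-submodule of `ℤ[t]/4ℤ[t]` generated by the
residue classes of `p` and of `2`; equivalently, it is generated by `φ, τ` subject only
to `2τ = 0` and `2φ = pτ`. -/
noncomputable def Mp (p : Polynomial ℤ) : Submodule (Polynomial ℤ) Z4t :=
  Submodule.span (Polynomial ℤ)
    {Ideal.Quotient.mk (Ideal.span {(4 : Polynomial ℤ)}) p,
     Ideal.Quotient.mk (Ideal.span {(4 : Polynomial ℤ)}) 2}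

open Polynomial Submodule

theorem sq_dvd_mul_add_mul_iff {R : Type*} [CommRing R] [IsDomain R] {π p a c : R}
    (hπ : Prime π) (hp : ¬π ∣ p) : π ^ 2 ∣ a * p + π * c ↔ ∃ u, a = π * u ∧ π ∣ u * p + c := by
  constructor
  · rintro ⟨w, hw⟩
    obtain ⟨u, rfl⟩ : π ∣ a :=
      (hπ.dvd_or_dvd ⟨π * w - c, by linear_combination hw⟩).resolve_right hp
    refine ⟨u, rfl, w, mul_left_cancel₀ hπ.ne_zero ?_⟩
    linear_combination hw
  · rintro ⟨u, rfl, w, hw⟩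
    exact ⟨w, by linear_combination π * hw⟩

theorem Polynomial.prime_two : Prime (2 : ℤ[X]) := by
  simpa using (prime_C_iff (R := ℤ)).2 Int.prime_two

theorem isPrincipalIdealRing_quotient_map_C {R : Type*} [CommRing R] (I : Ideal R) [I.IsMaximal] :
    IsPrincipalIdealRing (R[X] ⧸ I.map C) := by
  let := Ideal.Quotient.field I
  exact .of_surjective _ (Ideal.polynomialQuotientEquivQuotientPolynomial I).surjective

instance : IsPrincipalIdealRing (ℤ[X] ⧸ Ideal.span {(2 : ℤ[X])}) := by
  have : (Ideal.span {(2 : ℤ)}).IsMaximal :=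
    PrincipalIdealRing.isMaximal_of_irreducible Int.prime_two.irreducible
  have h : (Ideal.span {(2 : ℤ)}).map C = Ideal.span {(2 : ℤ[X])} := by simp [Ideal.map_span]
  exact h ▸ isPrincipalIdealRing_quotient_map_C _

instance : (Ideal.span {(2 : ℤ[X])}).IsPrime :=
  (Ideal.span_singleton_prime two_ne_zero).2 prime_two

section LengthOne

variable {R M : Type*} [CommRing R] [AddCommGroup M] [Module R M]

theorem IsLengthOne.finite (hM : IsLengthOne R M) : Module.Finite R M := by
  obtain ⟨_, _, _, g, _, hg, _⟩ := hM
  exact Module.Finite.of_surjective g hg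

theorem IsLengthOne.eq_zero_of_smul_eq_zero [IsDomain R] (hM : IsLengthOne R M) {π q : R}
    (hπ : Prime π) (hq : ¬π ∣ q) {x : M} (hπx : π • x = 0) (hqx : q • x = 0) : x = 0 := by
  obtain ⟨k, l, f, g, hf, hg, hfg⟩ := hM
  obtain ⟨v, rfl⟩ := hg x
  obtain ⟨a, ha⟩ : π • v ∈ LinearMap.range f := by rw [hfg, LinearMap.mem_ker, map_smul, hπx]
  obtain ⟨b, hb⟩ : q • v ∈ LinearMap.range f := by rw [hfg, LinearMap.mem_ker, map_smul, hqx]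
  have hab : q • a = π • b := hf <| by rw [map_smul, map_smul, ha, hb, smul_comm]
  have hdvd (i : Fin k) : π ∣ a i :=
    (hπ.dvd_or_dvd ⟨b i, congrFun hab i⟩).resolve_left hq
  choose c hc using hdvd
  have hfc : f c = v := by
    refine smul_right_injective _ hπ.ne_zero ?_
    change π • f c = π • v
    rw [← ha, ← map_smul]
    congr 1
    ext i
    exact (hc i).symm
  rw [← LinearMap.mem_ker, ← hfg]
  exact ⟨c, hfc⟩

theorem IsLengthOne.isTorsionFree_torsionBy [IsDomain R] (hM : IsLengthOne R M) {π : R}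
    (hπ : Prime π) : Module.IsTorsionFree (R ⧸ Ideal.span {π}) (torsionBy R M π) := by
  have : (Ideal.span {π}).IsPrime := (Ideal.span_singleton_prime hπ.ne_zero).2 hπ
  refine Module.IsTorsionFree.of_smul_eq_zero fun r x hrx ↦ ?_
  obtain ⟨q, rfl⟩ := Ideal.Quotient.mk_surjective r
  rw [Ideal.Quotient.eq_zero_iff_mem, Ideal.mem_span_singleton]
  refine or_iff_not_imp_left.2 fun hq ↦ Subtype.ext ?_
  exact hM.eq_zero_of_smul_eq_zero hπ hq x.2 congr($hrx)

end LengthOne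

section TorsionBasis

variable {R M ι : Type*} [CommRing R] [AddCommGroup M] [Module R M] [Fintype ι] {a : R}

theorem Submodule.torsionBy.exists_eq_sum_smul_basis
    (b : Module.Basis ι (R ⧸ Ideal.span {a}) (torsionBy R M a)) (x : torsionBy R M a) :
    ∃ g : ι → R, (x : M) = ∑ s, g s • (b s : M) := by
  choose g hg using fun s ↦ Ideal.Quotient.mk_surjective (b.repr x s)
  refine ⟨g, ?_⟩
  conv_lhs => rw [← b.sum_repr x]
  simp [← hg]

theorem Submodule.torsionBy.sum_smul_basis_eq_zero_iff
    (b : Module.Basis ι (R ⧸ Ideal.span {a}) (torsionBy R M a)) (g : ι → R) :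
    ∑ s, g s • (b s : M) = 0 ↔ ∀ s, a ∣ g s := by
  have hsum : ∑ s, g s • (b s : M) =
      ((∑ s, Ideal.Quotient.mk (Ideal.span {a}) (g s) • b s : torsionBy R M a) : M) := by
    simp
  rw [hsum, ZeroMemClass.coe_eq_zero]
  constructor
  · intro h s
    rw [← Ideal.mem_span_singleton, ← Ideal.Quotient.eq_zero_iff_mem]
    exact Fintype.linearIndependent_iff.1 b.linearIndependent _ h s
  · intro h
    refine Finset.sum_eq_zero fun s _ ↦ ?_
    rw [Ideal.Quotient.eq_zero_iff_mem.2 (Ideal.mem_span_singleton.2 (h s)), zero_smul]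

end TorsionBasis

universe u

theorem Submodule.exists_basis_eq_span_smul_inl {R : Type*} {V : Type u} [CommRing R] [IsDomain R]
    [IsPrincipalIdealRing R] [AddCommGroup V] [Module R V] [Module.Free R V] [Module.Finite R V]
    (N : Submodule R V) :
    ∃ (m : ℕ) (ρ : Type u) (_ : Fintype ρ) (b : Module.Basis (Fin m ⊕ ρ) R V) (q : Fin m → R),
      (∀ i, q i ≠ 0) ∧ N = span R (Set.range fun i ↦ q i • b (.inl i)) := by
  classical
  obtain ⟨m, snf⟩ := N.smithNormalForm (Module.Free.chooseBasis R V)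
  let σ : Fin m ⊕ {s // s ∉ Set.range snf.f} ≃ _ :=
    (Equiv.sumCongr (Equiv.ofInjective _ snf.f.injective) (Equiv.refl _)).trans
      (Equiv.sumCompl _)
  have hb (i : Fin m) : snf.bM.reindex σ.symm (.inl i) = snf.bM (snf.f i) := by
    simp [σ, Equiv.sumCompl]
  refine ⟨m, _, inferInstance, snf.bM.reindex σ.symm, snf.a, fun i hi ↦ ?_, ?_⟩
  · exact snf.bN.ne_zero i (Subtype.ext (by rw [snf.snf, hi, zero_smul, ZeroMemClass.coe_zero]))
  · simp_rw [hb, ← snf.snf]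
    rw [show (fun i ↦ (snf.bN i : V)) = N.subtype ∘ snf.bN from rfl, Set.range_comp,
      span_image, snf.bN.span_eq, map_subtype_top]

namespace Mp

variable (p : ℤ[X])

noncomputable def presentation : ℤ[X] × ℤ[X] →ₗ[ℤ[X]] Mp p :=
  (LinearMap.toSpanSingleton ℤ[X] (Mp p) ⟨_, subset_span (Set.mem_insert _ _)⟩).coprod
    (LinearMap.toSpanSingleton ℤ[X] (Mp p) ⟨_, subset_span (Set.mem_insert_of_mem _ rfl)⟩)

theorem coe_presentation (z : ℤ[X] × ℤ[X]) :
    (presentation p z : Z4t) = Ideal.Quotient.mk _ (z.1 * p + 2 * z.2) := by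
  change Ideal.Quotient.mk _ (z.1 * p) + Ideal.Quotient.mk _ (z.2 * 2) = _
  rw [← map_add, mul_comm z.2]

theorem presentation_surjective : Function.Surjective (presentation p) := by
  rintro ⟨y, hy⟩
  obtain ⟨a, c, rfl⟩ := mem_span_pair.1 hy
  exact ⟨(a, c), Subtype.ext (by simp [presentation])⟩

theorem presentation_eq_zero_iff (z : ℤ[X] × ℤ[X]) :
    presentation p z = 0 ↔ 4 ∣ z.1 * p + 2 * z.2 := by
  rw [← ZeroMemClass.coe_eq_zero, coe_presentation, Ideal.Quotient.eq_zero_iff_mem,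
    Ideal.mem_span_singleton]

end Mp

section Model

variable {κ : Type*} (ρ : Type*) (p : κ → ℤ[X])

noncomputable def modelMap :
    ((κ → ℤ[X] × ℤ[X]) × (ρ → ℤ[X])) →ₗ[ℤ[X]]
      (Π i, Mp (p i)) × (ρ → ℤ[X] ⧸ Ideal.span {(2 : ℤ[X])}) :=
  (LinearMap.piMap fun i ↦ Mp.presentation (p i)).prodMap
    (LinearMap.piMap fun _ ↦ (Ideal.span {(2 : ℤ[X])}).mkQ)

theorem modelMap_surjective : Function.Surjective (modelMap ρ p) := by
  rintro ⟨y, c⟩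
  choose a ha using fun i ↦ Mp.presentation_surjective (p i) (y i)
  choose d hd using fun r ↦ Ideal.Quotient.mk_surjective (c r)
  exact ⟨(a, d), Prod.ext (funext ha) (funext hd)⟩

theorem modelMap_eq_zero_iff (z : (κ → ℤ[X] × ℤ[X]) × (ρ → ℤ[X])) :
    modelMap ρ p z = 0 ↔ (∀ i, 4 ∣ (z.1 i).1 * p i + 2 * (z.1 i).2) ∧ ∀ r, 2 ∣ z.2 r := by
  simp only [modelMap, Prod.ext_iff, funext_iff, LinearMap.prodMap_apply, LinearMap.coe_piMap,
    Pi.map_apply, Prod.fst_zero, Prod.snd_zero, Pi.zero_apply, Mp.presentation_eq_zero_iff,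
    mkQ_apply, Quotient.mk_eq_zero, Ideal.mem_span_singleton]

end Model

section Generators

variable {M κ ρ : Type*} [AddCommGroup M] [Module ℤ[X] M] [Fintype κ] [Fintype ρ]
  (b : Module.Basis (κ ⊕ ρ) (ℤ[X] ⧸ Ideal.span {(2 : ℤ[X])}) (torsionBy ℤ[X] M 2)) (f : κ → M)

noncomputable def generatorsMap : ((κ → ℤ[X] × ℤ[X]) × (ρ → ℤ[X])) →ₗ[ℤ[X]] M where
  toFun z := ∑ i, ((z.1 i).1 • f i + (z.1 i).2 • (b (.inl i) : M)) + ∑ r, z.2 r • (b (.inr r) : M)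
  map_add' z w := by
    simp only [Prod.fst_add, Prod.snd_add, Pi.add_apply, add_smul, Finset.sum_add_distrib]
    abel
  map_smul' c z := by
    simp only [Prod.smul_fst, Prod.smul_snd, Pi.smul_apply, smul_eq_mul, mul_smul, ← smul_add,
      ← Finset.smul_sum, RingHom.id_apply]

theorem generatorsMap_apply (a : κ → ℤ[X] × ℤ[X]) (c : ρ → ℤ[X]) :
    generatorsMap b f (a, c) =
      ∑ i, ((a i).1 • f i + (a i).2 • (b (.inl i) : M)) + ∑ r, c r • (b (.inr r) : M) :=
  rfl

variable {b f} {p : κ → ℤ[X]} (hf : ∀ i, (2 : ℤ[X]) • f i = p i • (b (.inl i) : M))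
include hf

theorem generatorsMap_surjective
    (hspan : ∀ x : M, ∃ d : κ → ℤ[X], (2 : ℤ[X]) • x = ∑ i, d i • p i • (b (.inl i) : M)) :
    Function.Surjective (generatorsMap b f) := by
  intro x
  obtain ⟨d, hd⟩ := hspan x
  have hx : x - ∑ i, d i • f i ∈ torsionBy ℤ[X] M 2 := by
    simp_rw [mem_torsionBy_iff, smul_sub, Finset.smul_sum, smul_comm (2 : ℤ[X]), hf, hd,
      sub_self]
  obtain ⟨g, hg⟩ := torsionBy.exists_eq_sum_smul_basis b ⟨_, hx⟩
  refine ⟨(fun i ↦ (d i, g (.inl i)), g ∘ .inr), ?_⟩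
  rw [Fintype.sum_sum_type] at hg
  rw [generatorsMap_apply, Finset.sum_add_distrib, add_assoc]
  exact add_eq_of_eq_sub' hg.symm

theorem two_smul_generatorsMap (a : κ → ℤ[X] × ℤ[X]) (c : ρ → ℤ[X]) :
    (2 : ℤ[X]) • generatorsMap b f (a, c) = ∑ i, ((a i).1 * p i) • (b (.inl i) : M) := by
  have he (s : κ ⊕ ρ) : (2 : ℤ[X]) • (b s : M) = 0 := (b s).2
  simp_rw [generatorsMap_apply, smul_add, Finset.smul_sum, smul_add, smul_comm (2 : ℤ[X]), hf,
    he, smul_zero, Finset.sum_const_zero, add_zero, mul_smul]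

theorem generatorsMap_eq_of_eq_two_mul {a : κ → ℤ[X] × ℤ[X]} {u : κ → ℤ[X]}
    (hu : ∀ i, (a i).1 = 2 * u i) (c : ρ → ℤ[X]) :
    generatorsMap b f (a, c) =
      ∑ i, (u i * p i + (a i).2) • (b (.inl i) : M) + ∑ r, c r • (b (.inr r) : M) := by
  simp_rw [generatorsMap_apply, hu, mul_comm (2 : ℤ[X]), mul_smul, hf, add_smul, mul_smul]

theorem generatorsMap_eq_zero_iff (hp : ∀ i, ¬2 ∣ p i) (z : (κ → ℤ[X] × ℤ[X]) × (ρ → ℤ[X])) :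
    generatorsMap b f z = 0 ↔ (∀ i, 4 ∣ (z.1 i).1 * p i + 2 * (z.1 i).2) ∧ ∀ r, 2 ∣ z.2 r := by
  obtain ⟨a, c⟩ := z
  have hbasis (u : κ → ℤ[X]) (v : ρ → ℤ[X]) :
      ∑ i, u i • (b (.inl i) : M) + ∑ r, v r • (b (.inr r) : M) = 0 ↔
        (∀ i, 2 ∣ u i) ∧ ∀ r, 2 ∣ v r := by
    simpa [Fintype.sum_sum_type] using torsionBy.sum_smul_basis_eq_zero_iff b (Sum.elim u v)
  simp_rw [show (4 : ℤ[X]) = 2 ^ 2 by norm_num, sq_dvd_mul_add_mul_iff prime_two (hp _)]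
  constructor
  · intro h
    have h2 (i : κ) : 2 ∣ (a i).1 := by
      have h2p := ((hbasis (fun i ↦ (a i).1 * p i) 0).1 (by
        simpa [two_smul_generatorsMap hf] using congr((2 : ℤ[X]) • $h))).1 i
      exact (prime_two.dvd_or_dvd h2p).resolve_right (hp i)
    choose u hu using h2
    rw [generatorsMap_eq_of_eq_two_mul hf hu, hbasis] at h
    exact ⟨fun i ↦ ⟨u i, hu i, h.1 i⟩, h.2⟩
  · rintro ⟨h1, h2⟩
    choose u hu hdvd using h1
    rw [generatorsMap_eq_of_eq_two_mul hf hu, hbasis]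
    exact ⟨hdvd, h2⟩

end Generators

theorem nonempty_linearEquiv_of_generators {M κ ρ : Type*} [AddCommGroup M] [Module ℤ[X] M]
    [Fintype κ] [Fintype ρ] {p : κ → ℤ[X]} (hp : ∀ i, ¬2 ∣ p i)
    {b : Module.Basis (κ ⊕ ρ) (ℤ[X] ⧸ Ideal.span {(2 : ℤ[X])}) (torsionBy ℤ[X] M 2)} {f : κ → M}
    (hf : ∀ i, (2 : ℤ[X]) • f i = p i • (b (.inl i) : M))
    (hspan : ∀ x : M, ∃ d : κ → ℤ[X], (2 : ℤ[X]) • x = ∑ i, d i • p i • (b (.inl i) : M)) :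
    Nonempty (M ≃ₗ[ℤ[X]] (Π i, Mp (p i)) × (ρ → ℤ[X] ⧸ Ideal.span {(2 : ℤ[X])})) := by
  have hker : LinearMap.ker (generatorsMap b f) = LinearMap.ker (modelMap ρ p) := by
    ext z
    simp only [LinearMap.mem_ker, generatorsMap_eq_zero_iff hf hp, modelMap_eq_zero_iff]
  exact ⟨((generatorsMap b f).quotKerEquivOfSurjective (generatorsMap_surjective hf hspan)).symm
    ≪≫ₗ quotEquivOfEq _ _ hker ≪≫ₗ
    (modelMap ρ p).quotKerEquivOfSurjective (modelMap_surjective ρ p)⟩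

theorem IsLengthOne.exists_adapted_generators {M : Type u} [AddCommGroup M] [Module ℤ[X] M]
    (hM : IsLengthOne ℤ[X] M) (hexp : ∀ x : M, (4 : ℤ[X]) • x = 0) :
    ∃ (m : ℕ) (ρ : Type u) (_ : Fintype ρ) (p : Fin m → ℤ[X])
      (b : Module.Basis (Fin m ⊕ ρ) (ℤ[X] ⧸ Ideal.span {(2 : ℤ[X])}) (torsionBy ℤ[X] M 2))
      (f : Fin m → M), (∀ i, ¬2 ∣ p i) ∧ (∀ i, (2 : ℤ[X]) • f i = p i • (b (.inl i) : M)) ∧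
      ∀ x : M, ∃ d : Fin m → ℤ[X], (2 : ℤ[X]) • x = ∑ i, d i • p i • (b (.inl i) : M) := by
  have := hM.finite
  have := hM.isTorsionFree_torsionBy prime_two
  have : Module.Finite (ℤ[X] ⧸ Ideal.span {(2 : ℤ[X])}) (torsionBy ℤ[X] M 2) :=
    .of_restrictScalars_finite ℤ[X] _ _
  let μ : M →ₗ[ℤ[X]] torsionBy ℤ[X] M 2 := (LinearMap.lsmul ℤ[X] M 2).codRestrict _ fun x ↦ by
    rw [mem_torsionBy_iff, LinearMap.lsmul_apply, smul_smul, ← hexp x]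
    norm_num
  -- `2M`, as a subspace of the `𝔽₂[t]`-module `M[2]`
  let N : Submodule (ℤ[X] ⧸ Ideal.span {(2 : ℤ[X])}) (torsionBy ℤ[X] M 2) :=
    (submodule_torsionBy_orderIso 2).symm (LinearMap.range μ)
  obtain ⟨m, ρ, _, b, q, hq, hN⟩ := N.exists_basis_eq_span_smul_inl
  choose p hp using fun i ↦ Ideal.Quotient.mk_surjective (q i)
  have hpb (i : Fin m) :
      ((q i • b (.inl i) : torsionBy ℤ[X] M 2) : M) = p i • (b (.inl i) : M) := by
    rw [← hp i, torsionBy.mk_ideal_smul, coe_smul_of_tower]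
  choose f hf using fun i ↦ (hN.ge (subset_span ⟨i, rfl⟩) : q i • b (.inl i) ∈ N)
  refine ⟨m, ρ, inferInstance, p, b, f, fun i h ↦ hq i ?_, fun i ↦ ?_, fun x ↦ ?_⟩
  · rw [← hp i, Ideal.Quotient.eq_zero_iff_mem, Ideal.mem_span_singleton]
    exact h
  · rw [← hpb]
    exact congr($(hf i).val)
  · obtain ⟨c, hc⟩ := mem_span_range_iff_exists_fun _ |>.1 (hN.le ⟨x, rfl⟩ : μ x ∈ span _ _)
    choose d hd using fun i ↦ Ideal.Quotient.mk_surjective (c i)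
    refine ⟨d, ?_⟩
    change (μ x : M) = _
    rw [← hc, coe_sum]
    refine Finset.sum_congr rfl fun i _ ↦ ?_
    rw [← hd i, torsionBy.mk_ideal_smul, coe_smul_of_tower, hpb]

/-- Every length-one `ℤ[t]`-module `M` with `4·M = 0` is isomorphic to a direct sum
`M(p₁) ⊕ ⋯ ⊕ M(p_k) ⊕ (ℤ[t]/2ℤ[t])^j` for some `k, j ≥ 0` and `p₁, …, p_k ∈ ℤ[t] ∖ 2ℤ[t]`. -/
theorem exponentFour_decomposition
    (M : Type) [AddCommGroup M] [Module (Polynomial ℤ) M]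
    (hM : IsLengthOne (Polynomial ℤ) M)
    (hexp : ∀ x : M, (4 : Polynomial ℤ) • x = 0) :
    ∃ (k j : ℕ) (p : Fin k → Polynomial ℤ),
      (∀ i, p i ∉ Ideal.span {(2 : Polynomial ℤ)}) ∧
      Nonempty (M ≃ₗ[Polynomial ℤ]
        ((Π i : Fin k, Mp (p i)) ×
          (Fin j → Polynomial ℤ ⧸ Ideal.span {(2 : Polynomial ℤ)}))) := by
  obtain ⟨k, ρ, _, p, b, f, hp, hf, hspan⟩ := hM.exists_adapted_generators hexp
  obtain ⟨e⟩ := nonempty_linearEquiv_of_generators hp hf hspan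
  refine ⟨k, Fintype.card ρ, p, fun i h ↦ hp i (Ideal.mem_span_singleton.1 h), ⟨e ≪≫ₗ ?_⟩⟩
  exact (LinearEquiv.refl _ _).prodCongr
    (LinearEquiv.funCongrLeft _ _ (Fintype.equivFin ρ).symm)
end
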